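/- Let λ, λ' ∈ ℝ be nonzero real algebraic integers (IsIntegral ℤ λ and IsIntegral ℤ λ'). Let G and G' be additive abelian groups, μ : G →+ ℝ and μ' : G' →+ ℝ additive homomorphisms, and h : G ≃+ G' an order isomorphism (for every z ∈ G, 0 ≤ μ z if and only if 0 ≤ μ' (h z)). Assume: (a) every value of μ lies in ℤ[1/λ] and every value of μ' lies in ℤ[1/λ']; (b) there exists x ∈ G with 0 < μ x; (c) the λ-shift property holds for (G, μ) and the λ'-shift property holds for (G', μ'). Then ℚ[λ] and ℚ[λ'] are identical as subsets of ℝ: Algebra.adjoin ℚ ({λ} : Set ℝ) = Algebra.adjoin ℚ ({λ'} : Set ℝ). (Lemma 6.) -/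

import Mathlib

/-!
An order isomorphism forces `μ' ∘ h` to be a positive multiple of `μ`, since both cut the
rationals at the same place: `q < μ z / μ x` iff `μ (q.den • z - q.num • x) > 0`. Feeding the
`λ'`-shift through `h` gives `λ' = μ x / μ y` for some `x, y ∈ G`, a quotient of elements of
`ℤ[1/λ] ⊆ ℚ(λ)`; symmetrically `λ ∈ ℚ(λ')`. So `ℚ(λ) = ℚ(λ')`, and as `λ` is algebraic both
fields coincide with the rings `ℚ[λ]`, `ℚ[λ']`.
-/

open IntermediateField

namespace AddMonoidHom

variable {G α : Type*} [AddCommGroup G] [Field α] [LinearOrder α] [IsStrictOrderedRing α]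
  {f g : G →+ α}

theorem pos_iff_pos_of_nonneg_iff (hfg : ∀ z, 0 ≤ f z ↔ 0 ≤ g z) (z : G) :
    0 < f z ↔ 0 < g z := by
  simpa only [map_neg, neg_nonneg, not_le] using not_congr (hfg (-z))

theorem rat_mul_lt_iff (f : G →+ α) (q : ℚ) (x z : G) :
    (q : α) * f x < f z ↔ 0 < f (q.den • z - q.num • x) := by
  have hden : (0 : α) < q.den := by exact_mod_cast q.pos
  have : f (q.den • z - q.num • x) = q.den * (f z - q * f x) := by
    rw [map_sub, map_nsmul, map_zsmul, nsmul_eq_mul, zsmul_eq_mul, Rat.cast_def]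
    field_simp
  rw [this, mul_pos_iff_of_pos_left hden, sub_pos]

variable [Archimedean α]

theorem div_eq_div_of_nonneg_iff (hfg : ∀ z, 0 ≤ f z ↔ 0 ≤ g z) {x : G} (hx : 0 < f x)
    (z : G) : g z / g x = f z / f x := by
  have hgx : 0 < g x := (pos_iff_pos_of_nonneg_iff hfg x).1 hx
  refine eq_of_forall_rat_lt_iff_lt fun q => ?_
  rw [lt_div_iff₀ hx, lt_div_iff₀ hgx, f.rat_mul_lt_iff, g.rat_mul_lt_iff,
    pos_iff_pos_of_nonneg_iff hfg]

theorem mem_subfield_of_shift (hfg : ∀ z, 0 ≤ f z ↔ 0 ≤ g z) {x : G} (hx : 0 < f x)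
    {S : Subfield α} (hf : ∀ z, f z ∈ S) {c : α} (hshift : ∃ y, c * g y = g x) : c ∈ S := by
  obtain ⟨y, hy⟩ := hshift
  have hgx : g x ≠ 0 := ((pos_iff_pos_of_nonneg_iff hfg x).1 hx).ne'
  have hgy : g y ≠ 0 := by
    rintro h0
    rw [h0, mul_zero] at hy
    exact hgx hy.symm
  have hc : c = (f y / f x)⁻¹ := by
    rw [← div_eq_div_of_nonneg_iff hfg hx, inv_div]
    exact eq_div_of_mul_eq hgy hy
  rw [hc]
  exact inv_mem (div_mem (hf y) (hf x))

end AddMonoidHom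

theorem Subfield.adjoin_int_inv_le {L : Type*} [Field L] {S : Subfield L} {x : L} (hx : x ∈ S) :
    Algebra.adjoin ℤ {x⁻¹} ≤ subalgebraOfSubring S.toSubring :=
  Algebra.adjoin_le (Set.singleton_subset_iff.2 (show x⁻¹ ∈ S from inv_mem hx))

theorem Algebra.adjoin_simple_eq_of_intermediateField_eq {K L : Type*} [Field K] [Field L]
    [Algebra K L] {x y : L} (hx : IsIntegral K x) (hxy : K⟮x⟯ = K⟮y⟯) :
    Algebra.adjoin K {x} = Algebra.adjoin K {y} := by
  have : Algebra.IsAlgebraic K K⟮x⟯ := isAlgebraic_adjoin_simple hx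
  have hy : IsAlgebraic K y := IntermediateField.isAlgebraic_iff.1
    (Algebra.IsAlgebraic.isAlgebraic (⟨y, hxy ▸ mem_adjoin_simple_self K y⟩ : K⟮x⟯))
  rw [← adjoin_simple_toSubalgebra_of_isAlgebraic hx.isAlgebraic,
    ← adjoin_simple_toSubalgebra_of_isAlgebraic hy, hxy]

theorem stmt10_general (lam lam' : ℝ)
    (hint : IsIntegral ℤ lam)
    {G G' : Type*} [AddCommGroup G] [AddCommGroup G']
    (μ : G →+ ℝ) (μ' : G' →+ ℝ) (h : G ≃+ G')
    (horder : ∀ z : G, 0 ≤ μ z ↔ 0 ≤ μ' (h z))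
    (ha : ∀ g : G, μ g ∈ Algebra.adjoin ℤ ({lam⁻¹} : Set ℝ))
    (ha' : ∀ g' : G', μ' g' ∈ Algebra.adjoin ℤ ({lam'⁻¹} : Set ℝ))
    (hb : ∃ x : G, 0 < μ x)
    (hc : ∀ x : G, ∃ y : G, lam * μ y = μ x)
    (hc' : ∀ x' : G', ∃ y' : G', lam' * μ' y' = μ' x') :
    Algebra.adjoin ℚ ({lam} : Set ℝ) = Algebra.adjoin ℚ ({lam'} : Set ℝ) := by
  obtain ⟨x, hx⟩ := hb
  have horder' : ∀ z' : G', 0 ≤ μ' z' ↔ 0 ≤ μ (h.symm z') := fun z' => by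
    simpa using (horder (h.symm z')).symm
  have hx' : 0 < μ' (h x) :=
    (AddMonoidHom.pos_iff_pos_of_nonneg_iff (g := μ'.comp h.toAddMonoidHom) horder x).1 hx
  have hlam' : lam' ∈ ℚ⟮lam⟯ :=
    AddMonoidHom.mem_subfield_of_shift (g := μ'.comp h.toAddMonoidHom) horder hx
      (S := ℚ⟮lam⟯.toSubfield)
      (fun z => Subfield.adjoin_int_inv_le (mem_adjoin_simple_self ℚ lam) (ha z))
      (by obtain ⟨y', hy'⟩ := hc' (h x); exact ⟨h.symm y', by simpa using hy'⟩)
  have hlam : lam ∈ ℚ⟮lam'⟯ :=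
    AddMonoidHom.mem_subfield_of_shift (g := μ.comp h.symm.toAddMonoidHom) horder' hx'
      (S := ℚ⟮lam'⟯.toSubfield)
      (fun z => Subfield.adjoin_int_inv_le (mem_adjoin_simple_self ℚ lam') (ha' z))
      (by obtain ⟨y, hy⟩ := hc x; exact ⟨h y, by simpa using hy⟩)
  exact Algebra.adjoin_simple_eq_of_intermediateField_eq hint.tower_top
    (le_antisymm (adjoin_simple_le_iff.2 hlam) (adjoin_simple_le_iff.2 hlam'))

theorem stmt10 (lam lam' : ℝ) (hlam : lam ≠ 0) (hlam' : lam' ≠ 0)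
    (hint : IsIntegral ℤ lam) (hint' : IsIntegral ℤ lam')
    {G G' : Type*} [AddCommGroup G] [AddCommGroup G']
    (μ : G →+ ℝ) (μ' : G' →+ ℝ) (h : G ≃+ G')
    (horder : ∀ z : G, 0 ≤ μ z ↔ 0 ≤ μ' (h z))
    (ha : ∀ g : G, μ g ∈ Algebra.adjoin ℤ ({lam⁻¹} : Set ℝ))
    (ha' : ∀ g' : G', μ' g' ∈ Algebra.adjoin ℤ ({lam'⁻¹} : Set ℝ))
    (hb : ∃ x : G, 0 < μ x)
    (hc : ∀ x : G, ∃ y : G, lam * μ y = μ x)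
    (hc' : ∀ x' : G', ∃ y' : G', lam' * μ' y' = μ' x') :
    Algebra.adjoin ℚ ({lam} : Set ℝ) = Algebra.adjoin ℚ ({lam'} : Set ℝ) :=
  stmt10_general lam lam' hint μ μ' h horder ha ha' hb hc hc'
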